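/- arXiv:1801.05362 — 2 statements merged into one kernel-verified Lean document; each statement's English description precedes it below -/
import Mathlib

section
/- Let φ : [0,1] → ℝ be Lipschitz continuous. Then for every n ≥ 1, k ≥ 1 and every probability vector P = (p_1,…,p_k), if N = (N_1,…,N_k) ~ Multinomial(n, P), then Var[Σ_{i=1}^k φ(N_i/n)] ≤ ‖φ‖²_{C^{0,1}}/n. -/
open scoped BigOperators ENNReal
open MeasureTheory

noncomputable section

/-- `φ` has `ℓ`th divergence speed `p^α`: `φ ∈ C^ℓ` and there are constants
`W > 0`, `c, c' ≥ 0` with `W p^{α-ℓ} - c' ≤ |φ^{(ℓ)}(p)| ≤ W p^{α-ℓ} + c` on `(0,1)`. -/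
def HasDivergenceSpeed (ℓ : ℕ) (α : ℝ) (φ : ℝ → ℝ) : Prop :=
  ContDiff ℝ ℓ φ ∧
  ∃ W c c' : ℝ, 0 < W ∧ 0 ≤ c ∧ 0 ≤ c' ∧
    ∀ p ∈ Set.Ioo (0:ℝ) 1,
      W * p ^ (α - (ℓ : ℝ)) - c' ≤ |iteratedDeriv ℓ φ p| ∧
      |iteratedDeriv ℓ φ p| ≤ W * p ^ (α - (ℓ : ℝ)) + c

/-- Multinomial probability of the histogram `N` for `n` samples from `P`. -/
def mWeight (n : ℕ) {k : ℕ} (P : Fin k → ℝ) (N : Fin k → ℕ) : ℝ :=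
  if (∑ i, N i) = n then
    (n.factorial : ℝ) / (∏ i, ((N i).factorial : ℝ)) * ∏ i, P i ^ (N i)
  else 0

/-- Expectation of `f(N)` for `N ~ Multinomial(n, P)`. -/
def mExp (n : ℕ) {k : ℕ} (P : Fin k → ℝ) (f : (Fin k → ℕ) → ℝ) : ℝ :=
  ∑' N : Fin k → ℕ, mWeight n P N * f N

/-- Variance of `f(N)` for `N ~ Multinomial(n, P)`. -/
def mVar (n : ℕ) {k : ℕ} (P : Fin k → ℝ) (f : (Fin k → ℕ) → ℝ) : ℝ :=
  mExp n P fun N => (f N - mExp n P f) ^ 2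

/-- The probability simplex `M_k`. -/
def probVec (k : ℕ) : Set (Fin k → ℝ) := {P | (∀ i, 0 ≤ P i) ∧ ∑ i, P i = 1}

/-- The minimax quadratic risk `R*(n, k; φ)` for estimating `θ(P) = ∑ i, φ (p i)`
from a multinomial histogram. -/
def minimaxRisk (n k : ℕ) (φ : ℝ → ℝ) : ℝ :=
  ⨅ est : (Fin k → ℕ) → ℝ, ⨆ P : probVec k,
    mExp n P.1 fun N => (est N - ∑ i, φ (P.1 i)) ^ 2

/-- Poisson probability mass function with mean `μ`. -/
def poissonP (μ : ℝ) (m : ℕ) : ℝ := Real.exp (-μ) * μ ^ m / (m.factorial : ℝ)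

/-- Expectation of `g(Ñ)` for `Ñ ~ Poisson(μ)`. -/
def poisExp (μ : ℝ) (g : ℕ → ℝ) : ℝ := ∑' m : ℕ, poissonP μ m * g m

/-- Variance of `g(Ñ)` for `Ñ ~ Poisson(μ)`. -/
def poisVar (μ : ℝ) (g : ℕ → ℝ) : ℝ := ∑' m : ℕ, poissonP μ m * (g m - poisExp μ g) ^ 2

/-- Expectation (in `ℝ≥0∞`) of a nonnegative `f(Ñ)` where `Ñ` has independent
coordinates `Ñ i ~ Poisson(μ i)`. -/
def pExp {k : ℕ} (μ : Fin k → ℝ) (f : (Fin k → ℕ) → ℝ) : ℝ≥0∞ :=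
  ∑' N : Fin k → ℕ, ENNReal.ofReal ((∏ i, poissonP (μ i) (N i)) * f N)

/-- The Poissonized minimax risk `R̃*(m, k; φ)`. -/
def poissonRisk (m : ℝ) (k : ℕ) (φ : ℝ → ℝ) : ℝ≥0∞ :=
  ⨅ est : (Fin k → ℕ) → ℝ, ⨆ P : probVec k,
    pExp (fun i => m * P.1 i) (fun N => (est N - ∑ i, φ (P.1 i)) ^ 2)

/-- The approximate probability vectors `M_k(ε)`. -/
def approxProbVec (k : ℕ) (ε : ℝ) : Set (Fin k → ℝ) :=
  {P | (∀ i, 0 ≤ P i) ∧ |(∑ i, P i) - 1| ≤ ε}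

/-- The approximated Poissonized minimax risk `R̃*(m, k, ε; φ)`. -/
def approxPoissonRisk (m : ℝ) (k : ℕ) (ε : ℝ) (φ : ℝ → ℝ) : ℝ≥0∞ :=
  ⨅ est : (Fin k → ℕ) → ℝ, ⨆ P : approxProbVec k ε,
    pExp (fun i => m * P.1 i) (fun N => (est N - ∑ i, φ (P.1 i)) ^ 2)

/-- The Hölder norm `‖f‖_{C^{0,β}}` of `f` on `[0,1]` (as an infimum of admissible
Hölder constants). -/
def holderNorm (β : ℝ) (f : ℝ → ℝ) : ℝ :=
  sInf {K : ℝ | 0 ≤ K ∧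
    ∀ x ∈ Set.Icc (0:ℝ) 1, ∀ y ∈ Set.Icc (0:ℝ) 1, |f x - f y| ≤ K * |x - y| ^ β}

/-- The best uniform approximation error `E_L(f, [a,b])` by polynomials of degree `≤ L`. -/
def bestPolyError (L : ℕ) (f : ℝ → ℝ) (a b : ℝ) : ℝ :=
  sInf {e : ℝ | ∃ g : Polynomial ℝ, g.natDegree ≤ L ∧
    e = sSup ((fun x => |f x - g.eval x|) '' Set.Icc a b)}

/-- Bernstein basis polynomial `B_{ν,n}(x)`. -/
def bernB (ν n : ℕ) (x : ℝ) : ℝ := (n.choose ν : ℝ) * x ^ ν * (1 - x) ^ (n - ν)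

/-- The generalized Hermite interpolation `H_L(p; φ, a, b)`. -/
def hermiteInterp (L : ℕ) (φ : ℝ → ℝ) (a b p : ℝ) : ℝ :=
  φ a + ∑ m ∈ Finset.Icc 1 L,
    (iteratedDeriv m φ a / (m.factorial : ℝ)) * (p - a) ^ m *
      ∑ s ∈ Finset.range (L - m + 1),
        ((L + 1 : ℝ) / (L + s + 1 : ℝ)) * bernB s (L + s + 1) ((p - a) / (b - a))

/-- The smoothed function `H_{L,Δ}[φ]`. -/
def HSmooth (L : ℕ) (Δ : ℝ) (φ : ℝ → ℝ) (p : ℝ) : ℝ :=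
  if p ≤ Δ / 2 then hermiteInterp L φ Δ (Δ / 2) (Δ / 2)
  else if p < Δ then hermiteInterp L φ Δ (Δ / 2) p
  else if p ≤ 1 then φ p
  else if p < 2 then hermiteInterp L φ 1 2 p
  else hermiteInterp L φ 1 2 2

/-- The fourth-order bias-corrected function `φ̄_{4,Δ}`. -/
def phiBar4 (n : ℕ) (Δ : ℝ) (φ : ℝ → ℝ) (p : ℝ) : ℝ :=
  HSmooth 6 Δ φ p
    - p / (2 * (n : ℝ)) * iteratedDeriv 2 (HSmooth 6 Δ φ) p
    - 2 * p / (3 * (n : ℝ) ^ 2) * iteratedDeriv 3 (HSmooth 6 Δ φ) p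
    - 7 * p / (24 * (n : ℝ) ^ 3) * iteratedDeriv 4 (HSmooth 6 Δ φ) p
    - 3 * p ^ 2 / (8 * (n : ℝ) ^ 2) * iteratedDeriv 4 (HSmooth 6 Δ φ) p

/-- First-order modulus of smoothness of `f` on `[-1,1]`. -/
def modulus1 (f : ℝ → ℝ) (t : ℝ) : ℝ :=
  sSup {d : ℝ | ∃ x ∈ Set.Icc (-1:ℝ) 1, ∃ y ∈ Set.Icc (-1:ℝ) 1, |x - y| ≤ t ∧ d = |f x - f y|}

/-- Second-order modulus of smoothness of `f` on `[0,1]`. -/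
def modulus2 (f : ℝ → ℝ) (t : ℝ) : ℝ :=
  sSup {d : ℝ | ∃ x ∈ Set.Icc (0:ℝ) 1, ∃ y ∈ Set.Icc (0:ℝ) 1,
    |x - y| ≤ 2 * t ∧ d = |f x + f y - 2 * f ((x + y) / 2)|}

/-!
Reveal the `n` i.i.d. samples behind `N` one at a time. For a function `f` of the histogram,
conditioning on the first `n - 1` samples splits `Var f(N)` into the expected conditional
variance of the last sample's contribution plus the variance of the conditional mean, and the
conditional mean inherits any bound `r` on the change of `f` caused by adding one sample.
A variance is at most the second moment about any point, so each sample contributes at most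
`r²`, whence `Var f(N) ≤ n r²`. For the plug-in functional an added sample changes a single
term `φ(N_i/n)`, by at most `‖φ‖_{C^{0,1}}/n`.
-/

open Finset

section Histogram

variable {ι : Type*} [Fintype ι] [DecidableEq ι]

lemma sum_add_single_one (M : ι → ℕ) (i : ι) :
    ∑ j, (M + Pi.single i 1 : ι → ℕ) j = ∑ j, M j + 1 := by
  simp [sum_add_distrib]

lemma prod_apply_add_single_one {α : Type*} [CommMonoid α] (F : ι → ℕ → α) (M : ι → ℕ)
    (i : ι) :
    ∏ j, F j ((M + Pi.single i 1 : ι → ℕ) j)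
      = F i (M i + 1) * ∏ j ∈ univ.erase i, F j (M j) := by
  rw [← mul_prod_erase univ _ (mem_univ i)]
  congr 1
  · simp
  · refine prod_congr rfl fun j hj => ?_
    simp [Pi.single_eq_of_ne (ne_of_mem_erase hj)]

lemma sum_apply_add_single_one_sub {α : Type*} [AddCommGroup α] (F : ι → ℕ → α)
    (M : ι → ℕ) (i : ι) :
    ∑ j, F j ((M + Pi.single i 1 : ι → ℕ) j) - ∑ j, F j (M j)
      = F i (M i + 1) - F i (M i) := by
  rw [← sum_sub_distrib, sum_eq_single i]
  · simp
  · intro j _ hj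
    simp [Pi.single_eq_of_ne hj]
  · simp

end Histogram

lemma sum_antidiagonalTuple_succ {k n : ℕ} {β : Type*} [AddCommMonoid β] (i : Fin k)
    (G : (Fin k → ℕ) → β) (hG : ∀ N, N i = 0 → G N = 0) :
    ∑ N ∈ Nat.antidiagonalTuple k (n + 1), G N
      = ∑ M ∈ Nat.antidiagonalTuple k n, G (M + Pi.single i 1) := by
  symm
  refine sum_bij_ne_zero (fun M _ _ => M + Pi.single i 1) ?_ ?_ ?_ fun _ _ _ => rfl
  · intro M hM _
    rw [Nat.mem_antidiagonalTuple] at hM ⊢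
    rw [sum_add_single_one, hM]
  · intro M₁ _ _ M₂ _ _ h
    exact add_right_cancel h
  · intro N hN hGN
    have hNi : N i ≠ 0 := fun h => hGN (hG N h)
    have hcancel : N - Pi.single i 1 + Pi.single i 1 = N := by
      funext j
      by_cases hj : j = i
      · subst hj
        simp only [Pi.add_apply, Pi.sub_apply, Pi.single_eq_same]
        omega
      · simp [Pi.single_eq_of_ne hj]
    refine ⟨N - Pi.single i 1, ?_, by rwa [hcancel], hcancel⟩
    rw [Nat.mem_antidiagonalTuple] at hN ⊢
    have := sum_add_single_one (N - Pi.single i 1) i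
    rw [hcancel] at this
    omega

section Multinomial

variable {k n : ℕ} {P : Fin k → ℝ}

lemma mWeight_eq_zero {N : Fin k → ℕ} (h : ∑ i, N i ≠ n) : mWeight n P N = 0 := by
  simp [mWeight, h]

lemma mWeight_nonneg (hP : ∀ i, 0 ≤ P i) (N : Fin k → ℕ) : 0 ≤ mWeight n P N := by
  unfold mWeight
  split_ifs
  · exact mul_nonneg (div_nonneg (by positivity) (by positivity))
      (prod_nonneg fun i _ => pow_nonneg (hP i) _)
  · exact le_rfl

/-- Pascal's rule for multinomial weights. -/
lemma succ_mul_mWeight_add_single_one {M : Fin k → ℕ} (hM : ∑ j, M j = n) (i : Fin k) :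
    (M i + 1 : ℝ) * mWeight (n + 1) P (M + Pi.single i 1)
      = (n + 1) * (P i * mWeight n P M) := by
  rw [mWeight, mWeight, if_pos (by rw [sum_add_single_one, hM]), if_pos hM,
    prod_apply_add_single_one (fun _ m => (m.factorial : ℝ)),
    prod_apply_add_single_one (fun j m => P j ^ m),
    ← mul_prod_erase univ (fun j => ((M j).factorial : ℝ)) (mem_univ i),
    ← mul_prod_erase univ (fun j => P j ^ M j) (mem_univ i)]
  have : ∏ j ∈ univ.erase i, ((M j).factorial : ℝ) ≠ 0 :=
    prod_ne_zero_iff.2 fun j _ => by positivity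
  push_cast [Nat.factorial_succ]
  field_simp
  ring

lemma mExp_eq_sum (n : ℕ) (P : Fin k → ℝ) (f : (Fin k → ℕ) → ℝ) :
    mExp n P f = ∑ N ∈ Nat.antidiagonalTuple k n, mWeight n P N * f N :=
  tsum_eq_sum fun N hN => by
    rw [mWeight_eq_zero (Nat.mem_antidiagonalTuple.not.1 hN), zero_mul]

lemma mExp_congr {f g : (Fin k → ℕ) → ℝ} (h : ∀ N, ∑ i, N i = n → f N = g N) :
    mExp n P f = mExp n P g := by
  rw [mExp_eq_sum, mExp_eq_sum]
  exact sum_congr rfl fun N hN => by rw [h N (Nat.mem_antidiagonalTuple.1 hN)]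

lemma mExp_mono (hP : ∀ i, 0 ≤ P i) {f g : (Fin k → ℕ) → ℝ}
    (h : ∀ N, ∑ i, N i = n → f N ≤ g N) : mExp n P f ≤ mExp n P g := by
  rw [mExp_eq_sum, mExp_eq_sum]
  exact sum_le_sum fun N hN =>
    mul_le_mul_of_nonneg_left (h N (Nat.mem_antidiagonalTuple.1 hN)) (mWeight_nonneg hP N)

lemma mExp_add (f g : (Fin k → ℕ) → ℝ) :
    mExp n P (fun N => f N + g N) = mExp n P f + mExp n P g := by
  simp only [mExp_eq_sum, mul_add, sum_add_distrib]

lemma mExp_sub (f g : (Fin k → ℕ) → ℝ) :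
    mExp n P (fun N => f N - g N) = mExp n P f - mExp n P g := by
  simp only [mExp_eq_sum, mul_sub, sum_sub_distrib]

lemma mExp_const_mul (a : ℝ) (f : (Fin k → ℕ) → ℝ) :
    mExp n P (fun N => a * f N) = a * mExp n P f := by
  simp only [mExp_eq_sum, mul_sum, mul_left_comm]

lemma mExp_zero (P : Fin k → ℝ) (f : (Fin k → ℕ) → ℝ) : mExp 0 P f = f 0 := by
  simp [mExp_eq_sum, Nat.antidiagonalTuple_zero_right, mWeight]

/-- One sample at a time: the last of `n + 1` samples falls in category `i` with
probability `p_i`, independently of the histogram `M` of the first `n`. -/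
lemma mExp_succ (f : (Fin k → ℕ) → ℝ) :
    mExp (n + 1) P f = mExp n P fun M => ∑ i, P i * f (M + Pi.single i 1) := by
  have hn : (n + 1 : ℝ) ≠ 0 := by positivity
  apply mul_left_cancel₀ hn
  calc (n + 1 : ℝ) * mExp (n + 1) P f
      = ∑ N ∈ Nat.antidiagonalTuple k (n + 1), ∑ i, N i * (mWeight (n + 1) P N * f N) := by
        rw [mExp_eq_sum, mul_sum]
        refine sum_congr rfl fun N hN => ?_
        have hN : (∑ i, N i : ℝ) = n + 1 := by exact_mod_cast Nat.mem_antidiagonalTuple.1 hN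
        rw [← sum_mul, hN]
    _ = ∑ i, ∑ M ∈ Nat.antidiagonalTuple k n, (M i + 1 : ℝ) *
          (mWeight (n + 1) P (M + Pi.single i 1) * f (M + Pi.single i 1)) := by
        rw [sum_comm]
        refine sum_congr rfl fun i _ => ?_
        rw [sum_antidiagonalTuple_succ i _ fun N hN => by simp [hN]]
        simp
    _ = ∑ i, ∑ M ∈ Nat.antidiagonalTuple k n, (n + 1 : ℝ) *
          (mWeight n P M * (P i * f (M + Pi.single i 1))) := by
        refine sum_congr rfl fun i _ => sum_congr rfl fun M hM => ?_
        rw [← mul_assoc, succ_mul_mWeight_add_single_one (Nat.mem_antidiagonalTuple.1 hM)]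
        ring
    _ = (n + 1 : ℝ) * mExp n P fun M => ∑ i, P i * f (M + Pi.single i 1) := by
        rw [mExp_eq_sum, sum_comm, mul_sum]
        simp only [mul_sum]

lemma mExp_const (hP1 : ∑ i, P i = 1) (a : ℝ) : mExp n P (fun _ => a) = a := by
  induction n with
  | zero => exact mExp_zero P _
  | succ n ih => simp only [mExp_succ, ← sum_mul, hP1, one_mul, ih]

lemma mVar_eq_mExp_sq_sub_sq (hP1 : ∑ i, P i = 1) (f : (Fin k → ℕ) → ℝ) :
    mVar n P f = mExp n P (fun N => f N ^ 2) - mExp n P f ^ 2 := by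
  have h : mExp n P (fun N => (f N - mExp n P f) ^ 2)
      = mExp n P (fun N => f N ^ 2 + (-2 * mExp n P f) * f N + mExp n P f ^ 2) :=
    mExp_congr fun N _ => by ring
  rw [mVar, h, mExp_add, mExp_add, mExp_const_mul, mExp_const hP1]
  ring

/-- Law of total variance, conditioning on the first `n` of `n + 1` samples. -/
lemma mVar_succ (hP1 : ∑ i, P i = 1) (f : (Fin k → ℕ) → ℝ) :
    mVar (n + 1) P f
      = mExp n P (fun M => ∑ i, P i * f (M + Pi.single i 1) ^ 2
          - (∑ i, P i * f (M + Pi.single i 1)) ^ 2)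
        + mVar n P (fun M => ∑ i, P i * f (M + Pi.single i 1)) := by
  rw [mVar_eq_mExp_sq_sub_sq hP1, mVar_eq_mExp_sq_sub_sq hP1, mExp_succ, mExp_succ, mExp_sub]
  ring

end Multinomial

lemma sum_mul_sq_sub_sq_le {ι : Type*} {s : Finset ι} {p : ι → ℝ} (hp : ∑ i ∈ s, p i = 1)
    (v : ι → ℝ) (a : ℝ) :
    ∑ i ∈ s, p i * v i ^ 2 - (∑ i ∈ s, p i * v i) ^ 2
      ≤ ∑ i ∈ s, p i * (v i - a) ^ 2 := by
  have h : ∑ i ∈ s, p i * (v i - a) ^ 2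
      = ∑ i ∈ s, p i * v i ^ 2 - 2 * a * ∑ i ∈ s, p i * v i + a ^ 2 * ∑ i ∈ s, p i := by
    simp only [mul_sum, ← sum_sub_distrib, ← sum_add_distrib]
    exact sum_congr rfl fun i _ => by ring
  rw [h, hp]
  nlinarith [sq_nonneg (∑ i ∈ s, p i * v i - a)]

/-- An Efron–Stein type bound. -/
lemma mVar_le_of_abs_sub_le {k : ℕ} {P : Fin k → ℝ} (hP : P ∈ probVec k) {r : ℝ} :
    ∀ (n : ℕ) (f : (Fin k → ℕ) → ℝ),
      (∀ M i, ∑ j, M j < n → |f (M + Pi.single i 1) - f M| ≤ r) → mVar n P f ≤ n * r ^ 2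
  | 0, f, _ => by simp [mVar_eq_mExp_sq_sub_sq hP.2, mExp_zero]
  | n + 1, f, hf => by
    obtain ⟨hP0, hP1⟩ := hP
    set g : (Fin k → ℕ) → ℝ := fun M => ∑ i, P i * f (M + Pi.single i 1)
    have hg : ∀ M j, ∑ i, M i < n → |g (M + Pi.single j 1) - g M| ≤ r := by
      intro M j hM
      have hfM : ∀ i, |f (M + Pi.single i 1 + Pi.single j 1) - f (M + Pi.single i 1)| ≤ r :=
        fun i => hf _ j (by rw [sum_add_single_one]; omega)
      calc |g (M + Pi.single j 1) - g M|
          = |∑ i, P i * (f (M + Pi.single i 1 + Pi.single j 1) - f (M + Pi.single i 1))| := by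
            simp only [g, mul_sub, sum_sub_distrib, add_right_comm M (Pi.single j 1)]
        _ ≤ ∑ i, P i * r := by
            refine (abs_sum_le_sum_abs _ _).trans (sum_le_sum fun i _ => ?_)
            rw [abs_mul, abs_of_nonneg (hP0 i)]
            exact mul_le_mul_of_nonneg_left (hfM i) (hP0 i)
        _ = r := by rw [← sum_mul, hP1, one_mul]
    have hstep : ∀ M, ∑ i, M i = n →
        ∑ i, P i * f (M + Pi.single i 1) ^ 2 - g M ^ 2 ≤ r ^ 2 := by
      intro M hM
      calc ∑ i, P i * f (M + Pi.single i 1) ^ 2 - g M ^ 2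
          ≤ ∑ i, P i * (f (M + Pi.single i 1) - f M) ^ 2 := sum_mul_sq_sub_sq_le hP1 _ _
        _ ≤ ∑ i, P i * r ^ 2 := by
            refine sum_le_sum fun i _ => mul_le_mul_of_nonneg_left ?_ (hP0 i)
            rw [← sq_abs]
            exact pow_le_pow_left₀ (abs_nonneg _) (hf M i (by omega)) 2
        _ = r ^ 2 := by rw [← sum_mul, hP1, one_mul]
    rw [mVar_succ hP1]
    calc mExp n P (fun M => ∑ i, P i * f (M + Pi.single i 1) ^ 2 - g M ^ 2) + mVar n P g
        ≤ r ^ 2 + n * r ^ 2 := by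
          gcongr
          · exact (mExp_mono hP0 hstep).trans_eq (mExp_const hP1 _)
          · exact mVar_le_of_abs_sub_le ⟨hP0, hP1⟩ n g hg
      _ = (n + 1 : ℕ) * r ^ 2 := by push_cast; ring

lemma holderNorm_nonneg (β : ℝ) (f : ℝ → ℝ) : 0 ≤ holderNorm β f :=
  Real.sInf_nonneg fun _ hK => hK.1

lemma abs_sub_le_holderNorm_mul {β : ℝ} {f : ℝ → ℝ}
    (hf : ∃ K : ℝ, 0 ≤ K ∧ ∀ x ∈ Set.Icc (0:ℝ) 1, ∀ y ∈ Set.Icc (0:ℝ) 1,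
      |f x - f y| ≤ K * |x - y| ^ β)
    {x y : ℝ} (hx : x ∈ Set.Icc (0:ℝ) 1) (hy : y ∈ Set.Icc (0:ℝ) 1) :
    |f x - f y| ≤ holderNorm β f * |x - y| ^ β := by
  rcases eq_or_ne x y with rfl | hxy
  · simpa using mul_nonneg (holderNorm_nonneg β f) (Real.rpow_nonneg (abs_nonneg (x - x)) β)
  · have hd : 0 < |x - y| ^ β := Real.rpow_pos_of_pos (abs_pos.2 (sub_ne_zero.2 hxy)) β
    rw [← div_le_iff₀ hd]
    exact le_csInf hf fun K hK => (div_le_iff₀ hd).2 (hK.2 x hx y hy)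

/-- variance of the plugin estimator for a Lipschitz `φ`. -/
theorem variance_plugin_lipschitz
    (φ : ℝ → ℝ)
    (hLip : ∃ K : ℝ, 0 ≤ K ∧ ∀ x ∈ Set.Icc (0:ℝ) 1, ∀ y ∈ Set.Icc (0:ℝ) 1,
        |φ x - φ y| ≤ K * |x - y| ^ (1 : ℝ)) :
    ∀ (n k : ℕ), 1 ≤ n → 1 ≤ k → ∀ P : Fin k → ℝ, P ∈ probVec k →
      mVar n P (fun N => ∑ i, φ ((N i : ℝ) / (n : ℝ)))
        ≤ (holderNorm 1 φ) ^ 2 / (n : ℝ) := by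
  intro n k hn _ P hP
  have hn0 : (0 : ℝ) < n := by exact_mod_cast hn
  have hunit : ∀ m : ℕ, m ≤ n → ((m : ℝ) / n) ∈ Set.Icc (0:ℝ) 1 := fun m hm =>
    ⟨by positivity, (div_le_one hn0).2 (by exact_mod_cast hm)⟩
  have hincr : ∀ (M : Fin k → ℕ) i, ∑ j, M j < n →
      |∑ j, φ (((M + Pi.single i 1 : Fin k → ℕ) j : ℕ) / n) - ∑ j, φ ((M j : ℝ) / n)|
        ≤ holderNorm 1 φ / n := by
    intro M i hM
    have hMi : M i + 1 ≤ n :=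
      (single_le_sum (fun j _ => Nat.zero_le (M j)) (mem_univ i)).trans_lt hM
    rw [sum_apply_add_single_one_sub (fun _ m => φ ((m : ℝ) / n))]
    refine (abs_sub_le_holderNorm_mul hLip (hunit _ hMi) (hunit (M i) (by omega))).trans_eq ?_
    rw [Real.rpow_one, ← sub_div, Nat.cast_succ, add_sub_cancel_left, abs_of_pos (by positivity),
      mul_one_div]
  calc mVar n P (fun N => ∑ i, φ ((N i : ℝ) / (n : ℝ)))
      ≤ n * (holderNorm 1 φ / n) ^ 2 := mVar_le_of_abs_sub_le hP n _ hincr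
    _ = (holderNorm 1 φ) ^ 2 / n := by field_simp
end
end

section
/- Let φ : [0,1] → ℝ be differentiable with φ' Lipschitz continuous. Then for every n ≥ 1, k ≥ 1 and every probability vector P = (p_1,…,p_k), if N = (N_1,…,N_k) ~ Multinomial(n, P), then |E[Σ_{i=1}^k φ(N_i/n)] − Σ_{i=1}^k φ(p_i)| ≤ ‖φ'‖_{C^{0,1}}/(2n). -/
open scoped BigOperators ENNReal
open MeasureTheory

noncomputable section

/-!
Each count `N i` of a multinomial histogram is binomial `(n, P i)`, so `E φ (N i / n)` is the
Bernstein polynomial of `φ` at `P i`. Expanding `φ` to first order at `P i`, the linear term has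
mean zero and the Lipschitz bound `K` on `φ'` controls the remainder by `K / 2 · (N i / n - P i)²`,
whose mean is the binomial variance `P i (1 - P i) / n ≤ P i / n`. Summing over `i` gives
`K / (2 n)`, and the infimum over all admissible `K` is the Hölder norm of `φ'`.
-/

open Finset
open scoped unitInterval

section Taylor

variable {φ : ℝ → ℝ} {K a b p x : ℝ}

theorem sub_sub_deriv_mul_le_of_lipschitz_deriv (hφ : Differentiable ℝ φ)
    (hL : ∀ x ∈ Set.Icc a b, ∀ y ∈ Set.Icc a b, |deriv φ x - deriv φ y| ≤ K * |x - y|)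
    (hp : p ∈ Set.Icc a b) (hx : x ∈ Set.Icc a b) :
    φ x - φ p - deriv φ p * (x - p) ≤ K / 2 * (x - p) ^ 2 := by
  set h : ℝ → ℝ := fun t => K / 2 * (t - p) ^ 2 - (φ t - φ p - deriv φ p * (t - p))
  have hd : ∀ t, HasDerivAt h (K * (t - p) - (deriv φ t - deriv φ p)) t := by
    intro t
    have hlin : HasDerivAt (fun t : ℝ => t - p) 1 t := (hasDerivAt_id t).sub_const p
    refine (((hlin.pow 2).const_mul (K / 2)).sub
      (((hφ t).hasDerivAt.sub_const (φ p)).sub (hlin.const_mul (deriv φ p)))).congr_deriv ?_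
    ring
  -- `h` decreases left of `p` and increases right of it, because `|φ' t - φ' p| ≤ K |t - p|`.
  have hmin : IsMinOn h (Set.Icc a b) p := by
    refine isMinOn_Icc_of_deriv (hd a).continuousAt (hd p).continuousAt (hd b).continuousAt
      (fun t _ => (hd t).differentiableAt.differentiableWithinAt)
      (fun t _ => (hd t).differentiableAt.differentiableWithinAt) ?_ ?_
    · intro t ht
      have := abs_le.1 (hL t ⟨ht.1.le, ht.2.le.trans hp.2⟩ p hp)
      rw [abs_of_neg (sub_neg.2 ht.2)] at this
      rw [(hd t).deriv]
      linarith
    · intro t ht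
      have := abs_le.1 (hL t ⟨hp.1.trans ht.1.le, ht.2.le⟩ p hp)
      rw [abs_of_pos (sub_pos.2 ht.1)] at this
      rw [(hd t).deriv]
      linarith
  have hpx : h p ≤ h x := hmin hx
  norm_num [h] at hpx
  linarith

theorem abs_sub_sub_deriv_mul_le_of_lipschitz_deriv (hφ : Differentiable ℝ φ)
    (hL : ∀ x ∈ Set.Icc a b, ∀ y ∈ Set.Icc a b, |deriv φ x - deriv φ y| ≤ K * |x - y|)
    (hp : p ∈ Set.Icc a b) (hx : x ∈ Set.Icc a b) :
    |φ x - φ p - deriv φ p * (x - p)| ≤ K / 2 * (x - p) ^ 2 := by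
  have hneg : deriv (-φ) = -deriv φ := deriv.neg'
  have hL' : ∀ x ∈ Set.Icc a b, ∀ y ∈ Set.Icc a b,
      |deriv (-φ) x - deriv (-φ) y| ≤ K * |x - y| := by
    intro x hx y hy
    simpa [hneg, ← abs_neg (deriv φ x - deriv φ y), neg_add_eq_sub] using hL x hx y hy
  have hup := sub_sub_deriv_mul_le_of_lipschitz_deriv hφ hL hp hx
  have hlow := sub_sub_deriv_mul_le_of_lipschitz_deriv hφ.neg hL' hp hx
  simp only [hneg, Pi.neg_apply] at hlow
  exact abs_le.2 ⟨by linarith, hup⟩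

end Taylor

theorem bernstein.mean {n : ℕ} (hn : n ≠ 0) (x : I) :
    ∑ k : Fin (n + 1), bernstein n k x * ((k : ℝ) / n) = x := by
  have := congrArg (Polynomial.aeval (x : ℝ)) (bernsteinPolynomial.sum_smul ℝ n)
  simp only [map_sum, nsmul_eq_mul, map_mul, map_natCast, Polynomial.aeval_X,
    Polynomial.coe_aeval_eq_eval, sum_range] at this
  have hsum : ∑ k : Fin (n + 1), (k : ℝ) * bernstein n k x = n * x := this
  rw [← mul_div_cancel_left₀ (x : ℝ) (Nat.cast_ne_zero.2 hn), ← hsum, sum_div]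
  exact sum_congr rfl fun k _ => by ring

theorem abs_sum_bernstein_mul_sub_le {φ : ℝ → ℝ} (hφ : Differentiable ℝ φ) {K : ℝ}
    (hL : ∀ x ∈ Set.Icc (0 : ℝ) 1, ∀ y ∈ Set.Icc (0 : ℝ) 1, |deriv φ x - deriv φ y| ≤ K * |x - y|)
    {n : ℕ} (hn : n ≠ 0) (x : I) :
    |∑ k : Fin (n + 1), bernstein n k x * φ (k / n) - φ x| ≤ K / 2 * (x * (1 - x) / n) := by
  have hcentered : ∑ k : Fin (n + 1), bernstein n k x * φ (k / n) - φ x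
      = ∑ k : Fin (n + 1), bernstein n k x * (φ (k / n) - φ x - deriv φ x * (k / n - x)) := by
    simp only [mul_sub, sum_sub_distrib, ← sum_mul, bernstein.probability,
      mul_left_comm _ (deriv φ x), ← mul_sum, bernstein.mean hn]
    ring
  rw [hcentered]
  calc _ ≤ ∑ k : Fin (n + 1), bernstein n k x * (K / 2 * (x - bernstein.z k) ^ 2) := by
        refine (abs_sum_le_sum_abs _ _).trans (sum_le_sum fun k _ => ?_)
        have := abs_sub_sub_deriv_mul_le_of_lipschitz_deriv hφ hL x.2 (bernstein.z k).2
        rw [abs_mul, abs_of_nonneg bernstein_nonneg]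
        refine mul_le_mul_of_nonneg_left (this.trans_eq ?_) bernstein_nonneg
        rw [sub_sq_comm]
    _ = K / 2 * (x * (1 - x) / n) := by
        rw [← bernstein.variance hn x, mul_sum]
        exact sum_congr rfl fun k _ => by ring

section Multinomial

open Polynomial

variable {k n : ℕ}

theorem le_of_mem_piAntidiag {N : Fin k → ℕ} (hN : N ∈ piAntidiag univ n) (j : Fin k) :
    N j ≤ n :=
  (mem_piAntidiag.1 hN).1 ▸ single_le_sum (fun i _ => Nat.zero_le (N i)) (mem_univ j)

-- Multinomial theorem for `∑ i, C (P i) * (if i = j then X else 1)`: `X` marks the `j`th count.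
theorem sum_multinomial_C_mul_X_pow_apply (P : Fin k → ℝ) (j : Fin k) (n : ℕ) :
    ∑ N ∈ piAntidiag univ n, C ((Nat.multinomial univ N : ℝ) * ∏ i, P i ^ N i) * X ^ N j
      = ∑ m ∈ range (n + 1), C (n.choose m * P j ^ m * (∑ i, P i - P j) ^ (n - m)) * X ^ m := by
  set f : Fin k → ℝ[X] := fun i => C (P i) * if i = j then X else 1
  have hsum : ∑ i, f i = C (P j) * X + C (∑ i, P i - P j) := by
    have : ∀ i, f i = C (P i) + if i = j then C (P j) * (X - 1) else 0 := by
      intro i; by_cases h : i = j <;> simp [f, h]; ring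
    simp only [this, sum_add_distrib, sum_ite_eq', mem_univ, if_true, ← map_sum, map_sub]
    ring
  have hprod : ∀ N : Fin k → ℕ, ∏ i, f i ^ N i = C (∏ i, P i ^ N i) * X ^ N j := by
    intro N
    simp only [f, mul_pow, prod_mul_distrib, ← map_pow, ← map_prod, ite_pow, one_pow,
      prod_ite_eq', mem_univ, if_true]
  calc _ = (∑ i, f i) ^ n := by
        rw [sum_pow_eq_sum_piAntidiag]
        refine sum_congr rfl fun N _ => ?_
        rw [hprod, map_mul, map_natCast, mul_assoc]
    _ = _ := by
        rw [hsum, add_pow]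
        refine sum_congr rfl fun m _ => ?_
        simp only [map_mul, map_pow, map_natCast]
        ring

theorem sum_multinomial_mul_comp_apply (P : Fin k → ℝ) (j : Fin k) (n : ℕ) (g : ℕ → ℝ) :
    ∑ N ∈ piAntidiag univ n, ((Nat.multinomial univ N : ℝ) * ∏ i, P i ^ N i) * g (N j)
      = ∑ m ∈ range (n + 1), (n.choose m * P j ^ m * (∑ i, P i - P j) ^ (n - m)) * g m := by
  let L : ℝ[X] →ₗ[ℝ] ℝ := ∑ m ∈ range (n + 1), g m • lcoeff ℝ m
  have hL : ∀ c e, e ≤ n → L (C c * X ^ e) = c * g e := by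
    intro c e he
    simp only [L, LinearMap.sum_apply, LinearMap.smul_apply, lcoeff_apply, coeff_C_mul_X_pow,
      smul_eq_mul, mul_ite, mul_zero, sum_ite_eq', mem_range, if_pos (Nat.lt_succ_of_le he)]
    exact mul_comm _ _
  have := congrArg L (sum_multinomial_C_mul_X_pow_apply P j n)
  simp only [map_sum] at this
  rwa [sum_congr rfl fun N hN => hL _ _ (le_of_mem_piAntidiag hN j),
    sum_congr rfl fun m hm => hL _ _ (Nat.le_of_lt_succ (mem_range.1 hm))] at this

theorem mWeight_of_sum_eq (P : Fin k → ℝ) {N : Fin k → ℕ} (hN : ∑ i, N i = n) :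
    mWeight n P N = Nat.multinomial univ N * ∏ i, P i ^ N i := by
  have hspec : (∏ i, ((N i).factorial : ℝ)) * Nat.multinomial univ N = n.factorial := by
    exact_mod_cast hN ▸ Nat.multinomial_spec univ N
  have hprod : (∏ i, ((N i).factorial : ℝ)) ≠ 0 :=
    prod_ne_zero_iff.2 fun i _ => Nat.cast_ne_zero.2 (N i).factorial_ne_zero
  rw [mWeight, if_pos hN, ← hspec, mul_div_cancel_left₀ _ hprod]

theorem mExp_eq_sum_piAntidiag (P : Fin k → ℝ) (f : (Fin k → ℕ) → ℝ) :
    mExp n P f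
      = ∑ N ∈ piAntidiag univ n, ((Nat.multinomial univ N : ℝ) * ∏ i, P i ^ N i) * f N := by
  rw [mExp, tsum_eq_sum (s := piAntidiag univ n)]
  · exact sum_congr rfl fun N hN => by rw [mWeight_of_sum_eq P (mem_piAntidiag.1 hN).1]
  · intro N hN
    simp only [mem_piAntidiag, mem_univ, implies_true, and_true] at hN
    rw [mWeight, if_neg hN, zero_mul]

theorem mExp_sum (P : Fin k → ℝ) (f : Fin k → (Fin k → ℕ) → ℝ) :
    mExp n P (fun N => ∑ i, f i N) = ∑ i, mExp n P (f i) := by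
  simp only [mExp_eq_sum_piAntidiag, mul_sum]
  exact sum_comm

theorem mem_unitInterval_of_mem_probVec {P : Fin k → ℝ} (hP : P ∈ probVec k) (i : Fin k) :
    P i ∈ I :=
  ⟨hP.1 i, hP.2 ▸ single_le_sum (fun j _ => hP.1 j) (mem_univ i)⟩

theorem mExp_comp_apply_eq_sum_bernstein {P : Fin k → ℝ} (hP : P ∈ probVec k) (j : Fin k)
    (g : ℕ → ℝ) :
    mExp n P (fun N => g (N j))
      = ∑ m : Fin (n + 1), bernstein n m ⟨P j, mem_unitInterval_of_mem_probVec hP j⟩ * g m := by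
  rw [mExp_eq_sum_piAntidiag, sum_multinomial_mul_comp_apply, hP.2, sum_range]
  simp only [bernstein_apply]

end Multinomial

theorem abs_mExp_sum_sub_le_of_lipschitz_deriv {φ : ℝ → ℝ} (hφ : Differentiable ℝ φ) {K : ℝ}
    (hL : ∀ x ∈ Set.Icc (0 : ℝ) 1, ∀ y ∈ Set.Icc (0 : ℝ) 1, |deriv φ x - deriv φ y| ≤ K * |x - y|)
    {n k : ℕ} (hn : n ≠ 0) {P : Fin k → ℝ} (hP : P ∈ probVec k) :
    |mExp n P (fun N => ∑ i, φ ((N i : ℝ) / n)) - ∑ i, φ (P i)| ≤ K / (2 * n) := by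
  have hK : 0 ≤ K := by
    simpa using (abs_nonneg _).trans (hL 0 ⟨le_rfl, zero_le_one⟩ 1 ⟨zero_le_one, le_rfl⟩)
  rw [mExp_sum, ← sum_sub_distrib]
  calc _ ≤ ∑ i, K / 2 * (P i * (1 - P i) / n) := by
        refine (abs_sum_le_sum_abs _ _).trans (sum_le_sum fun i _ => ?_)
        rw [mExp_comp_apply_eq_sum_bernstein hP i (fun m => φ (m / n))]
        exact abs_sum_bernstein_mul_sub_le hφ hL hn _
    _ ≤ ∑ i, K / (2 * n) * P i := by
        refine sum_le_sum fun i _ => ?_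
        calc K / 2 * (P i * (1 - P i) / n) = K / (2 * n) * P i - K / (2 * n) * P i ^ 2 := by
              ring
          _ ≤ K / (2 * n) * P i := sub_le_self _ (by positivity)
    _ = K / (2 * n) := by rw [← mul_sum, hP.2, mul_one]

/-- bias of the plugin estimator when `φ'` is Lipschitz. -/
theorem bias_plugin_lipschitz_deriv
    (φ : ℝ → ℝ) (hdiff : Differentiable ℝ φ)
    (hLip : ∃ K : ℝ, 0 ≤ K ∧ ∀ x ∈ Set.Icc (0:ℝ) 1, ∀ y ∈ Set.Icc (0:ℝ) 1,
        |deriv φ x - deriv φ y| ≤ K * |x - y| ^ (1 : ℝ)) :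
    ∀ (n k : ℕ), 1 ≤ n → 1 ≤ k → ∀ P : Fin k → ℝ, P ∈ probVec k →
      |mExp n P (fun N => ∑ i, φ ((N i : ℝ) / (n : ℝ))) - ∑ i, φ (P i)|
        ≤ holderNorm 1 (deriv φ) / (2 * (n : ℝ)) := by
  intro n k hn _ P hP
  have h2n : 0 < 2 * (n : ℝ) := by positivity
  rw [le_div_iff₀ h2n]
  refine le_csInf hLip fun K hK => ?_
  rw [← le_div_iff₀ h2n]
  refine abs_mExp_sum_sub_le_of_lipschitz_deriv hdiff (fun x hx y hy => ?_) (by omega) hP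
  simpa only [Real.rpow_one] using hK.2 x hx y hy
end
end
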